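/- Let Kn > 0 and σ_{a0}, σ̃_a : (0,1) → ℝ be continuous. Suppose f₀, f̃, g : (0,1) × [-1,1] → ℝ are continuous, continuously differentiable in x with jointly continuous x-derivatives, and satisfy pointwise: v·∂ₓf̃(x,v) = (1/Kn)·(⟨f̃⟩(x) − f̃(x,v)) − Kn·σ_{a0}(x)·f̃(x,v) − Kn·σ̃_a(x)·f₀(x,v) and −v·∂ₓg(x,v) = (1/Kn)·(⟨g⟩(x) − g(x,v)) − Kn·σ_{a0}(x)·g(x,v). Then for every x ∈ (0,1): (d/dx) ∫_{-1}^{1} v·f̃(x,v)·g(x,v) dv = −Kn·σ̃_a(x) · ∫_{-1}^{1} f₀(x,v)·g(x,v) dv. -/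

import Mathlib

open MeasureTheory Set

/-- Velocity average `⟨h⟩(x) = (1/2)∫_{-1}^{1} h(x,v) dv`. -/
noncomputable def vavg (h : ℝ → ℝ → ℝ) (x : ℝ) : ℝ := (1 / 2) * ∫ v in (-1 : ℝ)..1, h x v

/-!
Differentiating under the integral sign, `∂ₓ ∫ v f̃ g dv = ∫ (v ∂ₓf̃) g + f̃ (v ∂ₓg) dv`.
Substituting the two transport equations, the absorption terms `Kn σ_{a0} f̃ g` cancel,
and the scattering terms integrate to `⟨f̃⟩ ∫ g − ⟨g⟩ ∫ f̃ = 0` because the averaging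
operator is self-adjoint. Only the source term `−Kn σ̃ₐ f₀ g` survives.
-/

section ParametricIntegral

variable {E : Type*} [NormedAddCommGroup E]
  {U : Set ℝ} {a b : ℝ} {F F' : ℝ → ℝ → E}

theorem ContinuousOn.intervalIntegrable_of_mem_prod
    (hF : ContinuousOn (fun p : ℝ × ℝ => F p.1 p.2) (U ×ˢ Icc a b)) (hab : a ≤ b)
    {y : ℝ} (hy : y ∈ U) : IntervalIntegrable (F y) volume a b :=
  (hF.comp (Continuous.prodMk_right y).continuousOn fun _ hv => ⟨hy, hv⟩).intervalIntegrable_of_Icc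
    hab

theorem hasDerivAt_intervalIntegral_of_continuousOn [NormedSpace ℝ E] (hU : IsOpen U)
    (hab : a ≤ b)
    (hF : ContinuousOn (fun p : ℝ × ℝ => F p.1 p.2) (U ×ˢ Icc a b))
    (hF' : ContinuousOn (fun p : ℝ × ℝ => F' p.1 p.2) (U ×ˢ Icc a b))
    (hderiv : ∀ y ∈ U, ∀ v ∈ Icc a b, HasDerivAt (fun y => F y v) (F' y v) y)
    {x : ℝ} (hx : x ∈ U) :
    HasDerivAt (fun y => ∫ v in a..b, F y v) (∫ v in a..b, F' x v) x := by
  obtain ⟨ε, hε, hball⟩ := Metric.nhds_basis_closedBall.mem_iff.1 (hU.mem_nhds hx)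
  obtain ⟨C, hC⟩ := ((isCompact_closedBall x ε).prod isCompact_Icc).exists_bound_of_continuousOn
    (hF'.mono (prod_mono hball subset_rfl))
  have hIoc : ∀ v ∈ uIoc a b, v ∈ Icc a b := fun v hv =>
    Ioc_subset_Icc_self (uIoc_of_le hab ▸ hv)
  refine (intervalIntegral.hasDerivAt_integral_of_dominated_loc_of_deriv_le
    (bound := fun _ => C)
    (Metric.ball_mem_nhds x hε) ?_ (hF.intervalIntegrable_of_mem_prod hab hx)
    (hF'.intervalIntegrable_of_mem_prod hab hx).def'.aestronglyMeasurable ?_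
    intervalIntegrable_const ?_).2
  · filter_upwards [hU.mem_nhds hx] with y hy
    exact (hF.intervalIntegrable_of_mem_prod hab hy).def'.aestronglyMeasurable
  · refine ae_of_all _ fun v hv y hy => hC (y, v) ⟨?_, hIoc v hv⟩
    exact Metric.ball_subset_closedBall hy
  · exact ae_of_all _ fun v hv y hy =>
      hderiv y (hball (Metric.ball_subset_closedBall hy)) v (hIoc v hv)

end ParametricIntegral

theorem integral_vavg_mul_sub_vavg_mul {f g : ℝ → ℝ → ℝ} {x : ℝ}
    (hf : IntervalIntegrable (f x) volume (-1) 1) (hg : IntervalIntegrable (g x) volume (-1) 1) :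
    ∫ v in (-1 : ℝ)..1, (vavg f x * g x v - vavg g x * f x v) = 0 := by
  rw [intervalIntegral.integral_sub (hg.const_mul _) (hf.const_mul _),
    intervalIntegral.integral_const_mul, intervalIntegral.integral_const_mul]
  simp only [vavg]
  ring

theorem greens_identity_absorption_1D_general
    (Kn : ℝ) (σa0 σat : ℝ → ℝ)
    (f0 ft g ftx gx : ℝ → ℝ → ℝ)
    (hf0_cont : ContinuousOn (fun p : ℝ × ℝ => f0 p.1 p.2) (Ioo 0 1 ×ˢ Icc (-1) 1))
    (hft_cont : ContinuousOn (fun p : ℝ × ℝ => ft p.1 p.2) (Ioo 0 1 ×ˢ Icc (-1) 1))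
    (hg_cont : ContinuousOn (fun p : ℝ × ℝ => g p.1 p.2) (Ioo 0 1 ×ˢ Icc (-1) 1))
    (hftx_cont : ContinuousOn (fun p : ℝ × ℝ => ftx p.1 p.2) (Ioo 0 1 ×ˢ Icc (-1) 1))
    (hgx_cont : ContinuousOn (fun p : ℝ × ℝ => gx p.1 p.2) (Ioo 0 1 ×ˢ Icc (-1) 1))
    (hft_deriv : ∀ x ∈ Ioo (0 : ℝ) 1, ∀ v ∈ Icc (-1 : ℝ) 1,
      HasDerivAt (fun y => ft y v) (ftx x v) x)
    (hg_deriv : ∀ x ∈ Ioo (0 : ℝ) 1, ∀ v ∈ Icc (-1 : ℝ) 1,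
      HasDerivAt (fun y => g y v) (gx x v) x)
    (hfteq : ∀ x ∈ Ioo (0 : ℝ) 1, ∀ v ∈ Icc (-1 : ℝ) 1,
      v * ftx x v = (1 / Kn) * (vavg ft x - ft x v)
        - Kn * σa0 x * ft x v - Kn * σat x * f0 x v)
    (hgeq : ∀ x ∈ Ioo (0 : ℝ) 1, ∀ v ∈ Icc (-1 : ℝ) 1,
      -(v * gx x v) = (1 / Kn) * (vavg g x - g x v) - Kn * σa0 x * g x v) :
    ∀ x ∈ Ioo (0 : ℝ) 1,
      HasDerivAt (fun y => ∫ v in (-1 : ℝ)..1, v * ft y v * g y v)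
        (-(Kn * σat x) * ∫ v in (-1 : ℝ)..1, f0 x v * g x v) x := by
  intro x hx
  have hsnd : ContinuousOn (fun p : ℝ × ℝ => p.2) (Ioo 0 1 ×ˢ Icc (-1 : ℝ) 1) :=
    continuous_snd.continuousOn
  have hderiv := hasDerivAt_intervalIntegral_of_continuousOn isOpen_Ioo (by norm_num)
    (F := fun y v => v * ft y v * g y v)
    (F' := fun y v => v * ftx y v * g y v + v * ft y v * gx y v) ((hsnd.mul hft_cont).mul hg_cont)
    (((hsnd.mul hftx_cont).mul hg_cont).add ((hsnd.mul hft_cont).mul hgx_cont))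
    (fun y hy v hv => ((hft_deriv y hy v hv).const_mul v).mul (hg_deriv y hy v hv)) hx
  have hintegrable : ∀ h : ℝ → ℝ → ℝ,
      ContinuousOn (fun p : ℝ × ℝ => h p.1 p.2) (Ioo 0 1 ×ˢ Icc (-1) 1) →
      IntervalIntegrable (h x) volume (-1) 1 :=
    fun h hc => hc.intervalIntegrable_of_mem_prod (by norm_num) hx
  have hpointwise : ∀ v ∈ uIcc (-1 : ℝ) 1,
      v * ftx x v * g x v + v * ft x v * gx x v =
        1 / Kn * (vavg ft x * g x v - vavg g x * ft x v) - Kn * σat x * (f0 x v * g x v) := by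
    intro v hv
    rw [uIcc_of_le (by norm_num)] at hv
    linear_combination g x v * hfteq x hx v hv - ft x v * hgeq x hx v hv
  have hscatter := ((hintegrable _ hg_cont).const_mul (vavg ft x)).sub
    ((hintegrable _ hft_cont).const_mul (vavg g x))
  have hvalue : ∫ v in (-1 : ℝ)..1, (v * ftx x v * g x v + v * ft x v * gx x v) =
      -(Kn * σat x) * ∫ v in (-1 : ℝ)..1, f0 x v * g x v := by
    rw [intervalIntegral.integral_congr hpointwise,
      intervalIntegral.integral_sub (hscatter.const_mul _)
        ((hintegrable (fun y v => f0 y v * g y v) (hf0_cont.mul hg_cont)).const_mul _),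
      intervalIntegral.integral_const_mul, intervalIntegral.integral_const_mul,
      integral_vavg_mul_sub_vavg_mul (hintegrable _ hft_cont) (hintegrable _ hg_cont)]
    ring
  exact hvalue ▸ hderiv

/-- **1D differential form of the duality relation (3.6) for the absorption coefficient.**
If `f̃` solves the linearized RTE with source `−Kn σ̃ₐ f₀` and `g` solves the adjoint
equation, then `(d/dx)∫_{-1}^1 v f̃ g dv = −Kn σ̃ₐ(x) ∫_{-1}^1 f₀ g dv` on `(0,1)`. -/
theorem greens_identity_absorption_1D
    (Kn : ℝ) (hKn : 0 < Kn) (σa0 σat : ℝ → ℝ)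
    (hσa0 : ContinuousOn σa0 (Ioo 0 1)) (hσat : ContinuousOn σat (Ioo 0 1))
    (f0 ft g ftx gx : ℝ → ℝ → ℝ)
    (hf0_cont : ContinuousOn (fun p : ℝ × ℝ => f0 p.1 p.2) (Ioo 0 1 ×ˢ Icc (-1) 1))
    (hft_cont : ContinuousOn (fun p : ℝ × ℝ => ft p.1 p.2) (Ioo 0 1 ×ˢ Icc (-1) 1))
    (hg_cont : ContinuousOn (fun p : ℝ × ℝ => g p.1 p.2) (Ioo 0 1 ×ˢ Icc (-1) 1))
    (hftx_cont : ContinuousOn (fun p : ℝ × ℝ => ftx p.1 p.2) (Ioo 0 1 ×ˢ Icc (-1) 1))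
    (hgx_cont : ContinuousOn (fun p : ℝ × ℝ => gx p.1 p.2) (Ioo 0 1 ×ˢ Icc (-1) 1))
    (hft_deriv : ∀ x ∈ Ioo (0 : ℝ) 1, ∀ v ∈ Icc (-1 : ℝ) 1,
      HasDerivAt (fun y => ft y v) (ftx x v) x)
    (hg_deriv : ∀ x ∈ Ioo (0 : ℝ) 1, ∀ v ∈ Icc (-1 : ℝ) 1,
      HasDerivAt (fun y => g y v) (gx x v) x)
    (hfteq : ∀ x ∈ Ioo (0 : ℝ) 1, ∀ v ∈ Icc (-1 : ℝ) 1,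
      v * ftx x v = (1 / Kn) * (vavg ft x - ft x v)
        - Kn * σa0 x * ft x v - Kn * σat x * f0 x v)
    (hgeq : ∀ x ∈ Ioo (0 : ℝ) 1, ∀ v ∈ Icc (-1 : ℝ) 1,
      -(v * gx x v) = (1 / Kn) * (vavg g x - g x v) - Kn * σa0 x * g x v) :
    ∀ x ∈ Ioo (0 : ℝ) 1,
      HasDerivAt (fun y => ∫ v in (-1 : ℝ)..1, v * ft y v * g y v)
        (-(Kn * σat x) * ∫ v in (-1 : ℝ)..1, f0 x v * g x v) x :=
  greens_identity_absorption_1D_general Kn σa0 σat f0 ft g ftx gx hf0_cont hft_cont hg_cont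
    hftx_cont hgx_cont hft_deriv hg_deriv hfteq hgeq
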